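/- Let R be a subsemiring of ℝ≥0, let N ∈ R, let k ≥ 1 be a natural number, and let E be a finite R-labelled directed graph of weight N without loops of length strictly less than k. Then ct^k_R(E) ≤ k·(N/k)^k (an inequality of real numbers). -/

import Mathlib

/-- An `R`-labelled directed graph: vertices, edges, source/target maps and a label map. -/
structure LGraph (R : Type) where
  V : Type
  E : Type
  s : E → V
  t : E → V
  l : E → R

namespace LGraph

variable {R : Type}

/-- `p = (e₁, …, e_k)` is a path of length `k`: `t eᵢ = s eᵢ₊₁` for `1 ≤ i < k`. -/
def IsPath (G : LGraph R) {k : ℕ} (p : Fin k → G.E) : Prop :=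
  ∀ (i : ℕ) (hi : i + 1 < k), G.t (p ⟨i, by omega⟩) = G.s (p ⟨i + 1, hi⟩)

/-- A loop is a (nonempty) path whose source equals its target. -/
def IsLoop (G : LGraph R) {k : ℕ} (p : Fin k → G.E) : Prop :=
  G.IsPath p ∧ ∃ hk : 0 < k, G.s (p ⟨0, hk⟩) = G.t (p ⟨k - 1, by omega⟩)

/-- No repeated edges: edges are determined by their source and target. -/
def NoRepeats (G : LGraph R) : Prop :=
  ∀ e f : G.E, G.s e = G.s f → G.t e = G.t f → e = f

/-- The weight of a labelled graph: the sum of all labels. -/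
noncomputable def wt [CommSemiring R] (G : LGraph R) : R :=
  ∑ᶠ e : G.E, G.l e

/-- The `k`-content of a labelled graph: the sum, over all paths `p` of length `k`,
of the product of the labels of the edges of `p`. -/
noncomputable def ct [CommSemiring R] (G : LGraph R) (k : ℕ) : R :=
  ∑ᶠ p : {p : Fin k → G.E // G.IsPath p}, ∏ i, G.l (p.1 i)

/-- The Chirvasitu property for `k`-paths: every two edges belong to a common
path of length `k`. -/
def Chirvasitu (G : LGraph R) (k : ℕ) : Prop :=
  ∀ e f : G.E, ∃ p : Fin k → G.E, G.IsPath p ∧ (∃ i, p i = e) ∧ (∃ i, p i = f)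

end LGraph

/-!
Extend the `k`-content to arbitrary nonnegative edge weights `x`, with total weight `N`. Without
loops shorter than `k`, the edges of a path have pairwise distinct sources and pairwise distinct
targets. So if two weighted edges `e ≠ f` share a source or a target, no path contains both, the
content is affine in `(x e, x f)` on the segment `x e + x f = const`, and it is a convex
combination of its values at the two endpoints, where all of `x e + x f` sits on one edge: the
support shrinks. Once no two weighted edges share a source or a target, a weighted path is
determined by any one of its edges, so `∑ₚ ∑ᵢ x (p i) ≤ k N`, while AM-GM gives
`∏ᵢ x (p i) ≤ N ^ (k - 1) / k ^ k * ∑ᵢ x (p i)` for each path.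
-/

open Finset

theorem prod_le_sum_div_card_pow {ι : Type*} (s : Finset ι) {y : ι → ℝ} (hy : ∀ i ∈ s, 0 ≤ y i) :
    ∏ i ∈ s, y i ≤ ((∑ i ∈ s, y i) / #s) ^ #s := by
  rcases s.eq_empty_or_nonempty with rfl | hs
  · simp
  have hcard : (0 : ℝ) < #s := by exact_mod_cast hs.card_pos
  have amgm := Real.geom_mean_le_arith_mean_weighted s (fun _ => (#s : ℝ)⁻¹) y
    (fun _ _ => by positivity) (by simp [hcard.ne']) hy
  rw [← mul_sum, inv_mul_eq_div] at amgm
  calc ∏ i ∈ s, y i = (∏ i ∈ s, y i ^ (#s : ℝ)⁻¹) ^ #s := by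
        rw [← prod_pow]
        refine prod_congr rfl fun i hi => ?_
        rw [← Real.rpow_mul_natCast (hy i hi), inv_mul_cancel₀ hcard.ne', Real.rpow_one]
    _ ≤ ((∑ i ∈ s, y i) / #s) ^ #s :=
        pow_le_pow_left₀ (prod_nonneg fun i hi => Real.rpow_nonneg (hy i hi) _) amgm _

theorem prod_le_pow_pred_div_mul_sum {n : ℕ} (hn : n ≠ 0) {y : Fin n → ℝ} (hy : 0 ≤ y) {N : ℝ}
    (hN : ∑ i, y i ≤ N) : ∏ i, y i ≤ N ^ (n - 1) / n ^ n * ∑ i, y i := by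
  have hσ : 0 ≤ ∑ i, y i := sum_nonneg fun i _ => hy i
  calc ∏ i, y i ≤ ((∑ i, y i) / n) ^ n := by
        simpa using prod_le_sum_div_card_pow univ (fun i _ => hy i)
    _ = (∑ i, y i) ^ (n - 1) / n ^ n * ∑ i, y i := by
        rw [div_pow, ← pow_sub_one_mul hn]; ring
    _ ≤ N ^ (n - 1) / n ^ n * ∑ i, y i := by gcongr

section TransferWeight

variable {ι M : Type*} [DecidableEq ι]

def transferWeight [AddZeroClass M] (x : ι → M) (e f : ι) : ι → M :=
  Function.update (Function.update x e 0) f (x e + x f)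

theorem transferWeight_nonneg [AddZeroClass M] [Preorder M] [AddLeftMono M] {x : ι → M}
    (hx : 0 ≤ x) (e f : ι) : 0 ≤ transferWeight x e f := by
  intro i
  simp only [transferWeight, Function.update_apply]
  split_ifs
  exacts [add_nonneg (hx e) (hx f), le_rfl, hx i]

theorem transferWeight_eq_zero_of_notMem [AddZeroClass M] {x : ι → M} {s : Finset ι}
    (hx : ∀ i ∉ s, x i = 0) {e f : ι} (hef : e ≠ f) (hf : f ∈ s) :
    ∀ i ∉ s.erase e, transferWeight x e f i = 0 := by
  intro i hi
  simp only [transferWeight, Function.update_apply]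
  split_ifs with hif hie
  · subst hif
    simp [hef.symm, hf] at hi
  · rfl
  · exact hx i (by simpa [hie] using hi)

theorem sum_transferWeight [Fintype ι] [AddCommMonoid M] (x : ι → M) {e f : ι} (hef : e ≠ f) :
    ∑ i, transferWeight x e f i = ∑ i, x i := by
  have he : e ∈ univ \ {f} := by simpa using hef
  rw [transferWeight, sum_update_of_mem (mem_univ f), sum_update_of_mem he,
    sum_eq_add_sum_sdiff_singleton_of_mem (mem_univ f) x,
    sum_eq_add_sum_sdiff_singleton_of_mem he x, zero_add, add_comm (x e), add_assoc]

theorem add_mul_prod_eq_transferWeight [CommSemiring M] (s : Finset ι) (x : ι → M) {e f : ι}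
    (hef : e ≠ f) (h : ¬ (e ∈ s ∧ f ∈ s)) :
    (x e + x f) * ∏ i ∈ s, x i
      = x e * ∏ i ∈ s, transferWeight x f e i + x f * ∏ i ∈ s, transferWeight x e f i := by
  wlog he : e ∈ s generalizing e f
  · by_cases hf : f ∈ s
    · rw [add_comm (x e), add_comm (x e * _)]
      exact this hef.symm (by tauto) hf
    · simp only [transferWeight, prod_update_of_notMem he, prod_update_of_notMem hf]
      ring
  have hf : f ∉ s := fun hf => h ⟨he, hf⟩
  simp only [transferWeight, prod_update_of_notMem hf, prod_update_of_mem he,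
    prod_update_of_notMem (fun h => hf (mem_sdiff.1 h).1), zero_mul, mul_zero, add_zero]
  rw [← mul_prod_erase s x he, ← sdiff_singleton_eq_erase]
  ring

end TransferWeight

namespace LGraph

variable {R : Type} (G : LGraph R)

def NoShortLoops (k : ℕ) : Prop :=
  ∀ (m : ℕ) (q : Fin m → G.E), m < k → ¬ G.IsLoop q

variable {G} {k : ℕ} {p : Fin k → G.E}

theorem IsPath.s_ne_t (hG : G.NoShortLoops k) (hp : G.IsPath p) {i j : ℕ} (hij : i ≤ j)
    (hj : j < k) (hlen : j - i + 1 < k) : G.s (p ⟨i, by omega⟩) ≠ G.t (p ⟨j, hj⟩) := by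
  intro h
  refine hG (j - i + 1) (fun a => p ⟨i + a, by omega⟩) hlen
    ⟨fun a ha => hp (i + a) (by omega), by omega, ?_⟩
  convert h using 3 <;> simp only [Fin.mk.injEq] <;> omega

theorem IsPath.injective_s_comp (hG : G.NoShortLoops k) (hp : G.IsPath p) :
    Function.Injective (G.s ∘ p) := by
  refine Function.injective_iff_pairwise_ne.2 (Pairwise.of_lt fun i ⟨j, hj⟩ hij => ?_)
  replace hij : (i : ℕ) < j := hij
  obtain ⟨j, rfl⟩ := Nat.exists_eq_add_one_of_ne_zero (by omega : j ≠ 0)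
  show G.s (p i) ≠ G.s (p ⟨j + 1, hj⟩)
  rw [← hp j hj]
  exact hp.s_ne_t hG (by omega) _ (by omega)

theorem IsPath.injective_t_comp (hG : G.NoShortLoops k) (hp : G.IsPath p) :
    Function.Injective (G.t ∘ p) := by
  refine Function.injective_iff_pairwise_ne.2 (Pairwise.of_lt fun i j hij => ?_)
  replace hij : (i : ℕ) < j := hij
  show G.t (p i) ≠ G.t (p j)
  rw [hp i (by omega)]
  exact hp.s_ne_t hG hij j.2 (by omega)

theorem IsPath.injective (hG : G.NoShortLoops k) (hp : G.IsPath p) : Function.Injective p :=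
  (hp.injective_s_comp hG).of_comp

theorem IsPath.eq_of_apply_eq {A : Set G.E} (hs : Set.InjOn G.s A) (ht : Set.InjOn G.t A)
    {q : Fin k → G.E} (hp : G.IsPath p) (hq : G.IsPath q) (hpA : ∀ i, p i ∈ A)
    (hqA : ∀ i, q i ∈ A) {i : Fin k} (hi : p i = q i) : p = q := by
  have up : ∀ j, (i : ℕ) ≤ j → ∀ hj : j < k, p ⟨j, hj⟩ = q ⟨j, hj⟩ := by
    intro j hij
    induction j, hij using Nat.le_induction with
    | base => exact fun _ => hi
    | succ j _ ih =>
      intro hj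
      exact hs (hpA _) (hqA _) (by rw [← hp j hj, ← hq j hj, ih])
  have down : ∀ j, j ≤ (i : ℕ) → ∀ hj : j < k, p ⟨j, hj⟩ = q ⟨j, hj⟩ := by
    intro j hji
    induction hji using Nat.decreasingInduction with
    | self => exact fun _ => hi
    | of_succ j hj ih =>
      intro hj'
      have hj1 : j + 1 < k := by omega
      exact ht (hpA _) (hqA _) (by rw [hp j hj1, hq j hj1, ih])
  funext j
  rcases le_total (i : ℕ) j with hij | hji
  exacts [up j hij j.2, down j hji j.2]

open Classical in
variable (G) in
noncomputable def pathSum [Fintype G.E] {M : Type*} [CommSemiring M] (k : ℕ) (x : G.E → M) : M :=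
  ∑ p : Fin k → G.E with G.IsPath p, ∏ i, x (p i)

theorem ct_eq_pathSum [CommSemiring R] [Fintype G.E] : G.ct k = G.pathSum k G.l := by
  classical
  rw [ct, pathSum, finsum_eq_sum_of_fintype]
  symm
  exact sum_subtype _ (fun _ => mem_filter_univ _) _

theorem add_mul_pathSum [Fintype G.E] [DecidableEq G.E] {M : Type*} [CommSemiring M]
    (hG : G.NoShortLoops k) (x : G.E → M) {e f : G.E} (hef : e ≠ f)
    (hst : G.s e = G.s f ∨ G.t e = G.t f) :
    (x e + x f) * G.pathSum k x
      = x e * G.pathSum k (transferWeight x f e) + x f * G.pathSum k (transferWeight x e f) := by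
  classical
  simp only [pathSum, mul_sum, ← sum_add_distrib]
  refine sum_congr rfl fun p hp => ?_
  have hp : G.IsPath p := (mem_filter_univ p).1 hp
  have hinj : Set.InjOn p (univ : Finset (Fin k)) := (hp.injective hG).injOn
  simp only [← prod_image hinj]
  refine add_mul_prod_eq_transferWeight _ x hef ?_
  rintro ⟨he, hf⟩
  obtain ⟨i, -, rfl⟩ := mem_image.1 he
  obtain ⟨j, -, rfl⟩ := mem_image.1 hf
  refine hef (congrArg p ?_)
  rcases hst with hs | ht
  exacts [hp.injective_s_comp hG hs, hp.injective_t_comp hG ht]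

theorem pathSum_le_of_injOn [Fintype G.E] (hk : 1 ≤ k) (hG : G.NoShortLoops k) {x : G.E → ℝ}
    (hx : 0 ≤ x) (hs : Set.InjOn G.s (Function.support x))
    (ht : Set.InjOn G.t (Function.support x)) :
    G.pathSum k x ≤ k * ((∑ e, x e) / k) ^ k := by
  classical
  set N := ∑ e, x e
  have hN : 0 ≤ N := sum_nonneg fun e _ => hx e
  set P := (univ : Finset (Fin k → G.E)).filter fun p => G.IsPath p ∧ ∀ i, p i ∈ Function.support x
  have hP : ∀ p ∈ P, G.IsPath p ∧ ∀ i, p i ∈ Function.support x := fun p hp => (mem_filter.1 hp).2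
  have hsupp : G.pathSum k x = ∑ p ∈ P, ∏ i, x (p i) := by
    have hzero : ∀ p ∈ univ.filter (fun p : Fin k → G.E => G.IsPath p), ∏ i, x (p i) ≠ 0 →
        ∀ i, p i ∈ Function.support x :=
      fun p _ hne i => prod_ne_zero_iff.1 hne i (mem_univ i)
    rw [pathSum, ← sum_filter_of_ne hzero, filter_filter]
  have hpath : ∀ p ∈ P, ∏ i, x (p i) ≤ N ^ (k - 1) / k ^ k * ∑ i, x (p i) := by
    intro p hp
    refine prod_le_pow_pred_div_mul_sum (by omega) (fun i => hx (p i)) ?_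
    rw [← sum_image ((hP p hp).1.injective hG).injOn]
    exact sum_le_univ_sum_of_nonneg hx
  have hcount : ∑ p ∈ P, ∑ i, x (p i) ≤ k * N := by
    rw [sum_comm]
    calc ∑ i, ∑ p ∈ P, x (p i) ≤ ∑ _i : Fin k, N := by
          refine sum_le_sum fun i _ => ?_
          have hinj : Set.InjOn (fun p : Fin k → G.E => p i) P := fun p hp q hq hpq =>
            (hP p hp).1.eq_of_apply_eq hs ht (hP q hq).1 (hP p hp).2 (hP q hq).2 (i := i) hpq
          rw [← sum_image hinj]
          exact sum_le_univ_sum_of_nonneg hx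
      _ = k * N := by simp
  calc G.pathSum k x = ∑ p ∈ P, ∏ i, x (p i) := hsupp
    _ ≤ ∑ p ∈ P, N ^ (k - 1) / k ^ k * ∑ i, x (p i) := sum_le_sum hpath
    _ ≤ N ^ (k - 1) / k ^ k * (k * N) := by rw [← mul_sum]; gcongr
    _ = k * (N / k) ^ k := by
        rw [div_pow]; field_simp; exact pow_sub_one_mul (by omega) N

theorem pathSum_le [Fintype G.E] (hk : 1 ≤ k) (hG : G.NoShortLoops k) {x : G.E → ℝ} (hx : 0 ≤ x) :
    G.pathSum k x ≤ k * ((∑ e, x e) / k) ^ k := by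
  classical
  obtain ⟨s, hxs⟩ : ∃ s : Finset G.E, ∀ e ∉ s, x e = 0 := ⟨univ, by simp⟩
  induction s using Finset.strongInduction generalizing x with
  | H s ih =>
  by_cases! hclash : ∃ e f, x e ≠ 0 ∧ x f ≠ 0 ∧ e ≠ f ∧ (G.s e = G.s f ∨ G.t e = G.t f)
  · obtain ⟨e, f, he, hf, hef, hst⟩ := hclash
    have hes : e ∈ s := by_contra fun h => he (hxs e h)
    have hfs : f ∈ s := by_contra fun h => hf (hxs f h)
    have hpos : 0 < x e + x f :=
      add_pos ((hx e).lt_of_ne (Ne.symm he)) ((hx f).lt_of_ne (Ne.symm hf))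
    have h₁ := ih _ (erase_ssubset hfs) (transferWeight_nonneg hx f e)
      (transferWeight_eq_zero_of_notMem hxs hef.symm hes)
    have h₂ := ih _ (erase_ssubset hes) (transferWeight_nonneg hx e f)
      (transferWeight_eq_zero_of_notMem hxs hef hfs)
    rw [sum_transferWeight _ hef.symm] at h₁
    rw [sum_transferWeight _ hef] at h₂
    refine le_of_mul_le_mul_left ?_ hpos
    rw [add_mul_pathSum hG x hef hst, add_mul]
    gcongr
    exacts [hx e, hx f]
  · refine pathSum_le_of_injOn hk hG hx (fun e he f hf hsef => ?_) (fun e he f hf htef => ?_)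
    exacts [by_contra fun hef => (hclash e f he hf hef).1 hsef,
      by_contra fun hef => (hclash e f he hf hef).2 htef]

end LGraph

theorem ct_le_of_no_short_loops_general (S : Subsemiring ℝ) (hS : ∀ x ∈ S, 0 ≤ x)
    (N : ℝ) (k : ℕ) (hk : 1 ≤ k)
    (G : LGraph ℝ) [Finite G.E]
    (hlab : ∀ e, G.l e ∈ S)
    (hwt : G.wt = N)
    (hnl : ∀ (m : ℕ) (q : Fin m → G.E), m < k → ¬ G.IsLoop q) :
    G.ct k ≤ k * (N / k) ^ k := by
  have := Fintype.ofFinite G.E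
  have hwt' : ∑ e, G.l e = N := by rw [← hwt, LGraph.wt, finsum_eq_sum_of_fintype]
  rw [LGraph.ct_eq_pathSum, ← hwt']
  exact LGraph.pathSum_le hk hnl fun e => hS _ (hlab e)

/-- For a subsemiring `S ⊆ ℝ≥0`, `N ∈ S`, `k ≥ 1`, and any finite
`S`-labelled directed graph `G` of weight `N` without loops of length strictly less
than `k`, one has `ct^k(G) ≤ k·(N/k)^k`. -/
theorem ct_le_of_no_short_loops (S : Subsemiring ℝ) (hS : ∀ x ∈ S, 0 ≤ x)
    (N : ℝ) (hN : N ∈ S) (k : ℕ) (hk : 1 ≤ k)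
    (G : LGraph ℝ) [Finite G.E]
    (hlab : ∀ e, G.l e ∈ S) (hne : ∀ e, G.l e ≠ 0) (hnr : G.NoRepeats)
    (hwt : G.wt = N)
    (hnl : ∀ (m : ℕ) (q : Fin m → G.E), m < k → ¬ G.IsLoop q) :
    G.ct k ≤ k * (N / k) ^ k :=
  ct_le_of_no_short_loops_general S hS N k hk G hlab hwt hnl
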